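/- (Stability of the norm of the reconstructor.) Let D and D̃ be dictionaries with ‖D − D̃‖_{1,2} ≤ λ, let a* be a minimizer of the LASSO objective for D at x and ã* a minimizer of the LASSO objective for D̃ at x. Then | ‖D a*‖_2² − ‖D̃ ã*‖_2² | ≤ 2 |v_D(x) − v_{D̃}(x)| ≤ (1 + ‖x‖_2/4) ‖x‖_2³ · ‖D − D̃‖_{1,2} / λ. -/

import Mathlib

open Finset Matrix

noncomputable def norm2 {ι : Type*} [Fintype ι] (v : ι → ℝ) : ℝ :=
  Real.sqrt (∑ i, v i ^ 2)

noncomputable def norm1 {ι : Type*} [Fintype ι] (v : ι → ℝ) : ℝ :=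
  ∑ i, |v i|

noncomputable def norm0 {ι : Type*} (v : ι → ℝ) : ℕ :=
  Set.ncard {i | v i ≠ 0}

noncomputable def dot {ι : Type*} [Fintype ι] (u v : ι → ℝ) : ℝ :=
  ∑ i, u i * v i

def col {d m : ℕ} (D : Matrix (Fin d) (Fin m) ℝ) (i : Fin m) : Fin d → ℝ :=
  fun r => D r i

def IsDictionary {d m : ℕ} (D : Matrix (Fin d) (Fin m) ℝ) : Prop :=
  ∀ i, norm2 (_root_.col D i) = 1

noncomputable def norm12 {d m : ℕ} (E : Matrix (Fin d) (Fin m) ℝ) : ℝ :=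
  ⨆ i : Fin m, norm2 (_root_.col E i)

noncomputable def lassoObj {d m : ℕ} (lam : ℝ) (D : Matrix (Fin d) (Fin m) ℝ)
    (x : Fin d → ℝ) (z : Fin m → ℝ) : ℝ :=
  (1/2) * (norm2 (x - D.mulVec z))^2 + lam * norm1 z

def IsLassoMin {d m : ℕ} (lam : ℝ) (D : Matrix (Fin d) (Fin m) ℝ)
    (x : Fin d → ℝ) (a : Fin m → ℝ) : Prop :=
  ∀ z, lassoObj lam D x a ≤ lassoObj lam D x z

def Incoherent {d m : ℕ} (mu : ℝ) (D : Matrix (Fin d) (Fin m) ℝ) : Prop :=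
  ∀ i j, i ≠ j → |dot (_root_.col D i) (_root_.col D j)| ≤ mu / Real.sqrt d

noncomputable def kMargin {d m : ℕ} (lam : ℝ) (k : ℕ) (D : Matrix (Fin d) (Fin m) ℝ)
    (x : Fin d → ℝ) (a : Fin m → ℝ) : ℝ :=
  ⨆ I : {I : Finset (Fin m) // I.card = m - k},
    ⨅ j : {j : Fin m // j ∈ I.1}, (lam - |dot (_root_.col D j.1) (x - D.mulVec a)|)

/-!
At a LASSO minimiser `a` the objective along the ray `t ↦ t • a`, `t ≥ 0`, is a quadratic in `t`
minimised at the interior point `t = 1`; its vanishing derivative gives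
`⟪x, D a⟫ - ‖D a‖² = λ ‖a‖₁`, hence `v_D(x) = ‖x‖² / 2 - ‖D a‖² / 2`, which turns the first
inequality into an equality.

For the second, `v_D(x) - v_D̃(x)` is at most the difference of the two objectives at `ã`, that is
`(‖x - D ã‖² - ‖x - D̃ ã‖²) / 2`. Comparing `ã` with `0` gives `‖x - D̃ ã‖ ≤ ‖x‖` and
`λ ‖ã‖₁ ≤ ‖x‖² / 2`, so the residuals differ by at most
`‖(D - D̃) ã‖ ≤ ‖D - D̃‖_{1,2} ‖ã‖₁ ≤ ‖D - D̃‖_{1,2} ‖x‖² / (2λ) ≤ ‖x‖² / 2`.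
-/

section Norms

variable {ι : Type*} [Fintype ι]

lemma norm2_eq_norm_toLp (v : ι → ℝ) : norm2 v = ‖WithLp.toLp 2 v‖ := by
  simp [norm2, EuclideanSpace.norm_eq, sq_abs]

lemma norm2_nonneg (v : ι → ℝ) : 0 ≤ norm2 v := Real.sqrt_nonneg _

lemma sq_norm2 (v : ι → ℝ) : norm2 v ^ 2 = ∑ i, v i ^ 2 :=
  Real.sq_sqrt (sum_nonneg fun _ _ => sq_nonneg _)

lemma norm2_sub_comm (u v : ι → ℝ) : norm2 (u - v) = norm2 (v - u) := by
  simp only [norm2_eq_norm_toLp, WithLp.toLp_sub, norm_sub_rev]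

lemma abs_norm2_sub_norm2_le (u v : ι → ℝ) : |norm2 u - norm2 v| ≤ norm2 (u - v) := by
  simpa only [norm2_eq_norm_toLp, WithLp.toLp_sub] using abs_norm_sub_norm_le _ _

lemma sq_norm2_sub_smul (x y : ι → ℝ) (t : ℝ) :
    norm2 (x - t • y) ^ 2 = norm2 x ^ 2 - 2 * t * dot x y + t ^ 2 * norm2 y ^ 2 := by
  simp only [sq_norm2, dot, Pi.sub_apply, Pi.smul_apply, smul_eq_mul, mul_sum,
    ← sum_sub_distrib, ← sum_add_distrib]
  exact sum_congr rfl fun i _ => by ring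

lemma norm1_nonneg (v : ι → ℝ) : 0 ≤ norm1 v := sum_nonneg fun _ _ => abs_nonneg _

lemma norm1_smul (c : ℝ) (v : ι → ℝ) : norm1 (c • v) = |c| * norm1 v := by
  simp [norm1, abs_mul, mul_sum]

end Norms

section ColumnNorm

variable {d m : ℕ}

lemma norm2_col_le_norm12 (E : Matrix (Fin d) (Fin m) ℝ) (i : Fin m) :
    norm2 (_root_.col E i) ≤ norm12 E :=
  le_ciSup (f := fun j => norm2 (_root_.col E j)) (Set.finite_range _).bddAbove i

lemma norm12_nonneg (E : Matrix (Fin d) (Fin m) ℝ) : 0 ≤ norm12 E :=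
  Real.iSup_nonneg fun _ => norm2_nonneg _

lemma norm12_sub_comm (D Dt : Matrix (Fin d) (Fin m) ℝ) :
    norm12 (D - Dt) = norm12 (Dt - D) := by
  unfold norm12
  congr 1 with i
  exact norm2_sub_comm (_root_.col D i) (_root_.col Dt i)

lemma norm2_mulVec_le (E : Matrix (Fin d) (Fin m) ℝ) (z : Fin m → ℝ) :
    norm2 (E *ᵥ z) ≤ norm12 E * norm1 z := by
  have hsum : E *ᵥ z = ∑ i, z i • _root_.col E i := by
    ext r
    simp [mulVec, dotProduct, _root_.col, mul_comm]
  rw [norm2_eq_norm_toLp, hsum, WithLp.toLp_sum, norm1, mul_sum]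
  refine (norm_sum_le _ _).trans (sum_le_sum fun i _ => ?_)
  rw [WithLp.toLp_smul, norm_smul, Real.norm_eq_abs, ← norm2_eq_norm_toLp, mul_comm]
  exact mul_le_mul_of_nonneg_right (norm2_col_le_norm12 E i) (abs_nonneg _)

end ColumnNorm

lemma two_mul_add_eq_zero_of_isMinOn_Ici {A b : ℝ}
    (h : IsMinOn (fun t => A * t ^ 2 + b * t) (Set.Ici 0) 1) : 2 * A + b = 0 := by
  have hderiv : HasDerivAt (fun t => A * t ^ 2 + b * t) (2 * A + b) 1 :=
    (((hasDerivAt_pow 2 (1 : ℝ)).const_mul A).add ((hasDerivAt_id' 1).const_mul b)).congr_deriv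
      (by norm_num; ring)
  exact (h.isLocalMin (Ici_mem_nhds zero_lt_one)).hasDerivAt_eq_zero hderiv

section Lasso

variable {d m : ℕ}

lemma lassoObj_smul_of_nonneg (lam : ℝ) (D : Matrix (Fin d) (Fin m) ℝ) (x : Fin d → ℝ)
    (a : Fin m → ℝ) {t : ℝ} (ht : 0 ≤ t) :
    lassoObj lam D x (t • a) = norm2 x ^ 2 / 2 +
      (norm2 (D *ᵥ a) ^ 2 / 2 * t ^ 2 + (lam * norm1 a - dot x (D *ᵥ a)) * t) := by
  rw [lassoObj, mulVec_smul, sq_norm2_sub_smul, norm1_smul, abs_of_nonneg ht]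
  ring

lemma lassoObj_zero (lam : ℝ) (D : Matrix (Fin d) (Fin m) ℝ) (x : Fin d → ℝ) :
    lassoObj lam D x 0 = norm2 x ^ 2 / 2 := by
  simpa using lassoObj_smul_of_nonneg lam D x 0 le_rfl

namespace IsLassoMin

variable {lam : ℝ} {D Dt : Matrix (Fin d) (Fin m) ℝ} {x : Fin d → ℝ} {a at' : Fin m → ℝ}

lemma dot_sub_sq_norm2_eq (ha : IsLassoMin lam D x a) :
    dot x (D *ᵥ a) - norm2 (D *ᵥ a) ^ 2 = lam * norm1 a := by
  have h1 := lassoObj_smul_of_nonneg lam D x a zero_le_one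
  rw [one_smul] at h1
  have hmin : IsMinOn (fun t => norm2 (D *ᵥ a) ^ 2 / 2 * t ^ 2 +
      (lam * norm1 a - dot x (D *ᵥ a)) * t) (Set.Ici 0) 1 :=
    isMinOn_iff.2 fun t ht => by
      have h := lassoObj_smul_of_nonneg lam D x a (Set.mem_Ici.1 ht)
      linarith [ha (t • a)]
  linarith [two_mul_add_eq_zero_of_isMinOn_Ici hmin]

lemma lassoObj_eq (ha : IsLassoMin lam D x a) :
    lassoObj lam D x a = norm2 x ^ 2 / 2 - norm2 (D *ᵥ a) ^ 2 / 2 := by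
  have h := lassoObj_smul_of_nonneg lam D x a zero_le_one
  rw [one_smul] at h
  rw [h]
  linear_combination -ha.dot_sub_sq_norm2_eq

lemma iInf_lassoObj_eq (ha : IsLassoMin lam D x a) :
    ⨅ z, lassoObj lam D x z = lassoObj lam D x a :=
  le_antisymm (ciInf_le ⟨_, Set.forall_mem_range.2 ha⟩ a) (le_ciInf ha)

lemma mul_norm1_le (ha : IsLassoMin lam D x a) : lam * norm1 a ≤ norm2 x ^ 2 / 2 := by
  have h := ha 0
  rw [lassoObj_zero, lassoObj] at h
  nlinarith [norm2_nonneg (x - D *ᵥ a)]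

lemma norm2_sub_mulVec_le (hlam : 0 ≤ lam) (ha : IsLassoMin lam D x a) :
    norm2 (x - D *ᵥ a) ≤ norm2 x := by
  have h := ha 0
  rw [lassoObj_zero, lassoObj] at h
  have := mul_nonneg hlam (norm1_nonneg a)
  exact pow_le_pow_iff_left₀ (norm2_nonneg _) (norm2_nonneg _) two_ne_zero |>.1 (by linarith)

lemma two_mul_lassoObj_sub_le (hlam : 0 < lam) (hclose : norm12 (D - Dt) ≤ lam)
    (ha : IsLassoMin lam D x a) (hat : IsLassoMin lam Dt x at') :
    2 * (lassoObj lam D x a - lassoObj lam Dt x at')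
      ≤ (1 + norm2 x / 4) * norm2 x ^ 3 * norm12 (D - Dt) / lam := by
  set X := norm2 x
  set ε := norm12 (D - Dt)
  set u := x - D *ᵥ at'
  set w := x - Dt *ᵥ at'
  set e := norm2 ((D - Dt) *ᵥ at')
  have hw : norm2 w ≤ X := hat.norm2_sub_mulVec_le hlam.le
  have hn : norm1 at' ≤ X ^ 2 / (2 * lam) := by
    rw [le_div_iff₀ (by positivity)]
    linarith [hat.mul_norm1_le]
  have he : e ≤ ε * (X ^ 2 / (2 * lam)) :=
    (norm2_mulVec_le _ _).trans (mul_le_mul_of_nonneg_left hn (norm12_nonneg _))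
  have he' : e ≤ X ^ 2 / 2 := by
    refine he.trans ?_
    calc ε * (X ^ 2 / (2 * lam)) ≤ lam * (X ^ 2 / (2 * lam)) := by gcongr
      _ = X ^ 2 / 2 := by field_simp
  have hu : norm2 u ≤ norm2 w + e := by
    have hwu : w - u = (D - Dt) *ᵥ at' := by
      rw [sub_mulVec, sub_sub_sub_cancel_left]
    have := abs_norm2_sub_norm2_le u w
    rw [norm2_sub_comm u w, hwu] at this
    linarith [le_abs_self (norm2 u - norm2 w)]
  have he0 : 0 ≤ e := norm2_nonneg _
  calc 2 * (lassoObj lam D x a - lassoObj lam Dt x at')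
      ≤ 2 * (lassoObj lam D x at' - lassoObj lam Dt x at') := by linarith [ha at']
    _ = norm2 u ^ 2 - norm2 w ^ 2 := by simp only [lassoObj]; ring
    _ ≤ e * (2 * norm2 w + e) := by nlinarith [norm2_nonneg u]
    _ ≤ ε * (X ^ 2 / (2 * lam)) * (2 * X + X ^ 2 / 2) :=
        mul_le_mul he (by linarith) (by linarith [norm2_nonneg w])
          (mul_nonneg (norm12_nonneg _) (by positivity))
    _ = (1 + X / 4) * X ^ 3 * ε / lam := by field_simp; ring

end IsLassoMin

end Lasso

theorem reconstructor_norm_stability_general {d m : ℕ} (lam : ℝ) (hlam : 0 < lam)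
    (D Dt : Matrix (Fin d) (Fin m) ℝ)
    (hclose : norm12 (D - Dt) ≤ lam) (x : Fin d → ℝ)
    (a at' : Fin m → ℝ) (ha : IsLassoMin lam D x a) (hat : IsLassoMin lam Dt x at') :
    |(norm2 (D.mulVec a))^2 - (norm2 (Dt.mulVec at'))^2|
        ≤ 2 * |(⨅ z : Fin m → ℝ, lassoObj lam D x z) - (⨅ z : Fin m → ℝ, lassoObj lam Dt x z)| ∧
      2 * |(⨅ z : Fin m → ℝ, lassoObj lam D x z) - (⨅ z : Fin m → ℝ, lassoObj lam Dt x z)|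
        ≤ (1 + norm2 x / 4) * (norm2 x)^3 * norm12 (D - Dt) / lam := by
  rw [ha.iInf_lassoObj_eq, hat.iInf_lassoObj_eq]
  have hle := ha.two_mul_lassoObj_sub_le hlam hclose hat
  have hge := hat.two_mul_lassoObj_sub_le hlam (by rwa [← norm12_sub_comm]) ha
  rw [← norm12_sub_comm] at hge
  have hv : lassoObj lam D x a - lassoObj lam Dt x at'
      = (norm2 (Dt *ᵥ at') ^ 2 - norm2 (D *ᵥ a) ^ 2) / 2 := by
    rw [ha.lassoObj_eq, hat.lassoObj_eq]; ring
  refine ⟨le_of_eq ?_, ?_⟩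
  · rw [hv, abs_div, abs_two, abs_sub_comm, mul_div_cancel₀ _ two_ne_zero]
  · rcases abs_cases (lassoObj lam D x a - lassoObj lam Dt x at') with ⟨h, -⟩ | ⟨h, -⟩ <;>
      linarith

/-- Stability of the norm of the reconstructor. -/
theorem reconstructor_norm_stability {d m : ℕ} (lam : ℝ) (hlam : 0 < lam)
    (D Dt : Matrix (Fin d) (Fin m) ℝ) (hD : IsDictionary D) (hDt : IsDictionary Dt)
    (hclose : norm12 (D - Dt) ≤ lam) (x : Fin d → ℝ)
    (a at' : Fin m → ℝ) (ha : IsLassoMin lam D x a) (hat : IsLassoMin lam Dt x at') :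
    |(norm2 (D.mulVec a))^2 - (norm2 (Dt.mulVec at'))^2|
        ≤ 2 * |(⨅ z : Fin m → ℝ, lassoObj lam D x z) - (⨅ z : Fin m → ℝ, lassoObj lam Dt x z)| ∧
      2 * |(⨅ z : Fin m → ℝ, lassoObj lam D x z) - (⨅ z : Fin m → ℝ, lassoObj lam Dt x z)|
        ≤ (1 + norm2 x / 4) * (norm2 x)^3 * norm12 (D - Dt) / lam :=
  reconstructor_norm_stability_general lam hlam D Dt hclose x a at' ha hat
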